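/- arXiv:1801.05768 — 6 statements merged into one kernel-verified Lean document; each statement's English description precedes it below -/
import Mathlib

section
/- For every fixed l ∈ ℕ, lim_{K→∞} [(1 − l/K) · H2(1/(K − l))] / H2(1/K) = 1, where the limit is over natural numbers K → ∞ (with K > l so that all quantities are defined). -/
/-!
With `f x = x · H₂(1/x)` the ratio is `f (K - l) / f K`. Expanding the entropy gives
`f x = log x + (x - 1) · log (x / (x - 1))`, whose second summand tends to `1` (it is
`y · log (1 + 1/y)` for `y = x - 1`). So `f` tends to infinity, while
`f (x - l) - f x → 0` because `log (x - l) - log x → 0`; hence the ratio tends to `1`.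
-/

open Filter Real Topology

namespace Real

theorem mul_binEntropy_inv (x : ℝ) :
    x * binEntropy x⁻¹ = log x + (x - 1) * log (x / (x - 1)) := by
  rcases eq_or_ne x 0 with rfl | hx
  · simp
  have hcompl : (1 - x⁻¹)⁻¹ = x / (x - 1) := by
    rw [← inv_div]; congr 1; field_simp
  rw [binEntropy, inv_inv, hcompl]
  field_simp

theorem tendsto_sub_one_mul_log_div_sub_one :
    Tendsto (fun x : ℝ => (x - 1) * log (x / (x - 1))) atTop (𝓝 1) := by
  refine ((tendsto_mul_log_one_add_div_atTop 1).comp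
    (tendsto_atTop_add_const_right atTop (-1) tendsto_id)).congr' ?_
  filter_upwards [eventually_gt_atTop 1] with x hx
  have : x - 1 ≠ 0 := by linarith
  simp only [Function.comp_apply, id, ← sub_eq_add_neg]
  congr 2
  field_simp
  ring

theorem tendsto_mul_binEntropy_inv_sub_log :
    Tendsto (fun x : ℝ => x * binEntropy x⁻¹ - log x) atTop (𝓝 1) := by
  simpa only [mul_binEntropy_inv, add_sub_cancel_left] using tendsto_sub_one_mul_log_div_sub_one

end Real

theorem tendsto_div_comp_sub_of_tendsto_sub_log {f : ℝ → ℝ} {a : ℝ}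
    (hf : Tendsto (fun x => f x - log x) atTop (𝓝 a)) (c : ℝ) :
    Tendsto (fun x => f (x - c) / f x) atTop (𝓝 1) := by
  have hf_atTop : Tendsto f atTop atTop :=
    (tendsto_atTop_add_left_of_le' _ (a - 1) (hf.eventually (eventually_ge_nhds (by linarith)))
      tendsto_log_atTop).congr (fun x => by ring)
  have hshift : Tendsto (fun x => x - c) atTop atTop := tendsto_atTop_add_const_right _ _ tendsto_id
  have hdiff : Tendsto (fun x => f (x - c) - f x) atTop (𝓝 0) := by
    have hlog : Tendsto (fun x => log (x - c) - log x) atTop (𝓝 0) := by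
      simpa only [← sub_eq_add_neg] using tendsto_log_comp_add_sub_log (-c)
    have := ((hf.comp hshift).sub hf).add hlog
    simp only [sub_self, add_zero] at this
    exact this.congr fun x => by simp only [Function.comp_apply]; ring
  have := (hdiff.div_atTop hf_atTop).const_add 1
  rw [add_zero] at this
  refine this.congr' ?_
  filter_upwards [hf_atTop.eventually_ne_atTop 0] with x hx
  field_simp
  ring

/-- **Sufficient condition for exact private search.** For every fixed `l`, the ratio
`(1 - l/K) · H₂(1/(K - l)) / H₂(1/K)` tends to `1` as the alphabet size `K → ∞`
(over natural numbers `K`, the expressions being meaningful once `K > l`). -/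
theorem exact_search_entropy_ratio (l : ℕ) :
    Tendsto
      (fun K : ℕ =>
        (1 - (l : ℝ) / K) * Real.binEntropy (1 / ((K : ℝ) - l)) / Real.binEntropy (1 / K))
      atTop (nhds 1) := by
  have hratio := (tendsto_div_comp_sub_of_tendsto_sub_log tendsto_mul_binEntropy_inv_sub_log
    (l : ℝ)).comp tendsto_natCast_atTop_atTop
  refine hratio.congr' ?_
  filter_upwards [eventually_gt_atTop l] with K hK
  have hKl : (K : ℝ) - l ≠ 0 := sub_ne_zero.2 (by exact_mod_cast hK.ne')
  have hK : (K : ℝ) ≠ 0 := Nat.cast_ne_zero.2 (Nat.ne_zero_of_lt hK)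
  simp only [Function.comp_apply, one_div]
  field_simp
end

section
/- Let K, M, l be natural numbers with M ≥ 1 and (l+1)·M ≤ K, let S_1, …, S_{l+1} be pairwise disjoint subsets of Fin K each of cardinality M, let Δ be a uniformly distributed random variable on Fin K, and let W_j = 1 if Δ ∈ S_j and W_j = 0 otherwise, for j = 1, …, l+1. Then the conditional entropy satisfies H(W_{l+1} | (W_1, …, W_l)) = (1 − l·M/K) · H2(M/(K − l·M)). -/
/-!
The indicator vector of a pairwise disjoint family `S` of subsets of `Fin K` takes only the
values `Pi.single j 1` (on `S j`) and `0` (off the union), so under a uniform `Δ` its entropy is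
`∑ⱼ η(|S j|/K) + η((K - ∑ⱼ |S j|)/K)`, where `η = negMulLog`. The pair
`(W_{l+1}, (W_1, …, W_l))` is a relabelling of the indicator vector of all `l + 1` sets, so the
conditional entropy equals
`η(M/K) + η(r/K) - η((M + r)/K)` with `r = K - (l+1)M`, and the grouping rule
`η(m/k) + η(r/k) = η(a/k) + (a/k) H₂(m/a)` for `a = m + r` turns this into the claimed value.
-/

open MeasureTheory Real

noncomputable def entropy {Ω : Type*} [MeasurableSpace Ω] (P : Measure Ω)
    {α : Type*} [Fintype α] (X : Ω → α) : ℝ :=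
  ∑ x : α, Real.negMulLog (P (X ⁻¹' {x})).toReal

noncomputable def condEntropy {Ω : Type*} [MeasurableSpace Ω] (P : Measure Ω)
    {α β : Type*} [Fintype α] [Fintype β] (X : Ω → α) (Y : Ω → β) : ℝ :=
  entropy P (fun ω => (X ω, Y ω)) - entropy P Y

open Finset Function

lemma negMulLog_div_add_negMulLog_div (m r k : ℝ) :
    negMulLog (m / k) + negMulLog (r / k)
      = negMulLog ((m + r) / k) + (m + r) / k * binEntropy (m / (m + r)) := by
  rcases eq_or_ne (m + r) 0 with ha | ha
  · rw [ha, eq_neg_of_add_eq_zero_right ha]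
    simp [negMulLog, neg_div]
  · have hm : m / k = (m + r) / k * (m / (m + r)) := by field_simp
    have hr : r / k = (m + r) / k * (r / (m + r)) := by field_simp
    have h1 : 1 - m / (m + r) = r / (m + r) := by field_simp; ring
    rw [hm, hr, negMulLog_mul, negMulLog_mul, binEntropy_eq_negMulLog_add_negMulLog_one_sub, h1]
    field_simp
    ring

section Uniform

variable {Ω : Type*} [MeasurableSpace Ω] {P : Measure Ω} {K : ℕ} {Δ : Ω → Fin K}

lemma measure_preimage_le_of_uniform (hunif : ∀ x, P (Δ ⁻¹' {x}) = (K : ENNReal)⁻¹)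
    (A : Finset (Fin K)) : P (Δ ⁻¹' A) ≤ #A * (K : ENNReal)⁻¹ := by
  calc P (Δ ⁻¹' A) = P (⋃ x ∈ A, Δ ⁻¹' {x}) := by simp
    _ ≤ ∑ x ∈ A, P (Δ ⁻¹' {x}) := measure_biUnion_finset_le _ _
    _ = #A * (K : ENNReal)⁻¹ := by simp [hunif]

variable [IsProbabilityMeasure P]

/-- The fibres of `Δ` need not be measurable, so additivity is recovered from subadditivity:
the bounds for `A` and `Aᶜ` add up to `P univ = 1`. -/
lemma measure_preimage_of_uniform (hunif : ∀ x, P (Δ ⁻¹' {x}) = (K : ENNReal)⁻¹)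
    (A : Finset (Fin K)) : P (Δ ⁻¹' A) = #A * (K : ENNReal)⁻¹ := by
  have hK : K ≠ 0 := (Δ (nonempty_of_isProbabilityMeasure P).some).pos.ne'
  have hsum : (#A : ENNReal) * (K : ENNReal)⁻¹ + #Aᶜ * (K : ENNReal)⁻¹ = 1 := by
    rw [← add_mul, ← Nat.cast_add, card_add_card_compl, Fintype.card_fin]
    exact ENNReal.mul_inv_cancel (by exact_mod_cast hK) (by simp)
  have hcover : 1 ≤ P (Δ ⁻¹' A) + #Aᶜ * (K : ENNReal)⁻¹ :=
    calc 1 = P (Δ ⁻¹' A ∪ Δ ⁻¹' ↑Aᶜ) := by simp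
      _ ≤ P (Δ ⁻¹' A) + P (Δ ⁻¹' ↑Aᶜ) := measure_union_le _ _
      _ ≤ P (Δ ⁻¹' A) + #Aᶜ * (K : ENNReal)⁻¹ := by
        gcongr; exact measure_preimage_le_of_uniform hunif _
  refine (measure_preimage_le_of_uniform hunif A).antisymm ?_
  rw [← hsum] at hcover
  exact (ENNReal.add_le_add_iff_right (ENNReal.mul_ne_top (by simp) (by simp [hK]))).1 hcover

lemma entropy_comp_of_uniform (hunif : ∀ x, P (Δ ⁻¹' {x}) = (K : ENNReal)⁻¹)
    {α : Type*} [Fintype α] [DecidableEq α] (g : Fin K → α) :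
    entropy P (fun ω => g (Δ ω)) = ∑ a, negMulLog (#{x | g x = a} / K) := by
  refine sum_congr rfl fun a _ => ?_
  have hfib : (fun ω => g (Δ ω)) ⁻¹' {a} = Δ ⁻¹' ↑({x | g x = a} : Finset (Fin K)) := by
    ext
    simp
  rw [hfib, measure_preimage_of_uniform hunif, ENNReal.toReal_mul, ENNReal.toReal_inv]
  simp [div_eq_mul_inv]

end Uniform

lemma entropy_comp_of_injective {Ω : Type*} [MeasurableSpace Ω] (P : Measure Ω)
    {α β : Type*} [Fintype α] [Fintype β] (X : Ω → α) {e : α → β} (he : Injective e) :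
    entropy P (fun ω => e (X ω)) = entropy P X := by
  refine (Fintype.sum_of_injective e he _ _ ?_ fun a => ?_).symm
  · rintro b hb
    have : (fun ω => e (X ω)) ⁻¹' {b} = ∅ := by
      ext ω; simpa using fun h => hb ⟨X ω, h⟩
    simp [this]
  · simp [Set.preimage, he.eq_iff]

section MemIndicator

variable {α ι : Type*} [DecidableEq α] {S : ι → Finset α} {x : α}

def memIndicator (S : ι → Finset α) (x : α) : ι → Fin 2 :=
  fun j => if x ∈ S j then 1 else 0

lemma memIndicator_eq_single [DecidableEq ι] (hS : Pairwise (Disjoint on S)) {j : ι}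
    (hx : x ∈ S j) : memIndicator S x = Pi.single j 1 := by
  ext i
  rcases eq_or_ne i j with rfl | hij
  · simp [memIndicator, hx]
  · simp [memIndicator, hij, disjoint_left.1 (hS hij.symm) hx]

lemma memIndicator_eq_zero [Fintype ι] (hx : x ∉ univ.biUnion S) : memIndicator S x = 0 := by
  ext j
  simp_all [memIndicator]

variable [Fintype α] [Fintype ι]

lemma filter_memIndicator_eq_single [DecidableEq ι] (hS : Pairwise (Disjoint on S)) (j : ι) :
    ({x | memIndicator S x = Pi.single j 1} : Finset α) = S j := by
  ext x
  refine ⟨fun hx => ?_, fun hx => by simp [memIndicator_eq_single hS hx]⟩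
  simpa [memIndicator] using congrFun (mem_filter.1 hx).2 j

lemma filter_memIndicator_eq_zero :
    ({x | memIndicator S x = 0} : Finset α) = (univ.biUnion S)ᶜ := by
  ext x
  simp [memIndicator, funext_iff]

end MemIndicator

lemma card_compl_biUnion_of_pairwiseDisjoint {α ι : Type*} [Fintype α] [DecidableEq α]
    [Fintype ι] {S : ι → Finset α} (hS : Pairwise (Disjoint on S)) :
    (#(univ.biUnion S)ᶜ : ℝ) = Fintype.card α - ∑ j, (#(S j) : ℝ) := by
  rw [card_compl, Nat.cast_sub (card_le_univ _), card_biUnion fun i _ j _ hij => hS hij]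
  push_cast
  rfl

lemma entropy_memIndicator_of_uniform {Ω : Type*} [MeasurableSpace Ω] {P : Measure Ω}
    [IsProbabilityMeasure P] {K : ℕ} {Δ : Ω → Fin K}
    (hunif : ∀ x, P (Δ ⁻¹' {x}) = (K : ENNReal)⁻¹)
    {ι : Type*} [Fintype ι] [DecidableEq ι] {S : ι → Finset (Fin K)}
    (hS : Pairwise (Disjoint on S)) :
    entropy P (fun ω => memIndicator S (Δ ω))
      = ∑ j, negMulLog (#(S j) / K) + negMulLog ((K - ∑ j, (#(S j) : ℝ)) / K) := by
  set e : Option ι → ι → Fin 2 := fun o => o.elim 0 (Pi.single · 1)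
  have he : Injective e := by
    rintro (_ | i) (_ | j) h
    · rfl
    · simpa [e] using congrFun h j
    · simpa [e] using congrFun h i
    · simpa [e, Pi.single_apply] using congrFun h i
  have hrange : ∀ x, memIndicator S x ∈ Set.range e := by
    intro x
    by_cases hx : x ∈ univ.biUnion S
    · obtain ⟨j, -, hxj⟩ := mem_biUnion.1 hx
      exact ⟨some j, (memIndicator_eq_single hS hxj).symm⟩
    · exact ⟨none, (memIndicator_eq_zero hx).symm⟩
  have hcell :
      ∀ o, ({x | memIndicator S x = e o} : Finset (Fin K)) = o.elim (univ.biUnion S)ᶜ S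
    | none => filter_memIndicator_eq_zero
    | some j => filter_memIndicator_eq_single hS j
  rw [entropy_comp_of_uniform hunif, ← Fintype.sum_of_injective e he
    (fun o => negMulLog (#(o.elim (univ.biUnion S)ᶜ S) / K)) _ (fun v hv => ?_)
    fun o => by rw [hcell], Fintype.sum_option, add_comm]
  · simp only [Option.elim_none, Option.elim_some, card_compl_biUnion_of_pairwiseDisjoint hS,
      Fintype.card_fin]
  · rw [filter_false_of_mem fun x _ (hxv : memIndicator S x = v) => hv (hxv ▸ hrange x)]
    simp

theorem condEntropy_disjoint_indicators_general
    (Ω : Type*) [MeasurableSpace Ω] (P : Measure Ω) [IsProbabilityMeasure P]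
    (K M l : ℕ)
    (S : Fin (l + 1) → Finset (Fin K))
    (hcard : ∀ j, (S j).card = M)
    (hdisj : ∀ i j, i ≠ j → Disjoint (S i) (S j))
    (Δ : Ω → Fin K)
    (hunif : ∀ x : Fin K, P (Δ ⁻¹' {x}) = (K : ENNReal)⁻¹) :
    condEntropy P (fun ω => if Δ ω ∈ S (Fin.last l) then (1 : Fin 2) else 0)
        (fun ω => fun j : Fin l => if Δ ω ∈ S j.castSucc then (1 : Fin 2) else 0)
      = (1 - (l : ℝ) * M / K) * Real.binEntropy ((M : ℝ) / ((K : ℝ) - l * M)) := by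
  have hK : (K : ℝ) ≠ 0 := by
    exact_mod_cast (Δ (nonempty_of_isProbabilityMeasure P).some).pos.ne'
  have hgroup := negMulLog_div_add_negMulLog_div M (K - (l + 1) * M) K
  rw [show (M : ℝ) + (K - (l + 1) * M) = K - l * M by ring] at hgroup
  show entropy P (fun ω => (Fin.snocEquiv fun _ => Fin 2).symm (memIndicator S (Δ ω)))
      - entropy P (fun ω => memIndicator (fun i : Fin l => S i.castSucc) (Δ ω)) = _
  rw [entropy_comp_of_injective _ _ (Equiv.injective _),
    entropy_memIndicator_of_uniform hunif hdisj,
    entropy_memIndicator_of_uniform hunif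
      (Pairwise.comp_of_injective hdisj (Fin.castSucc_injective l)),
    show 1 - (l : ℝ) * M / K = (K - l * M) / K by field_simp]
  simp only [hcard, sum_const, card_univ, Fintype.card_fin, nsmul_eq_mul]
  push_cast
  linear_combination hgroup

/-- **Conditional entropy of one more disjoint search indicator.** Let `Δ` be uniform on
`Fin K`, and let `S 1, …, S (l+1)` be pairwise disjoint subsets of `Fin K`, each of
cardinality `M ≥ 1`, with `(l+1)·M ≤ K`. With `W j = 1` iff `Δ ∈ S j`,
`H(W_{l+1} | (W_1, …, W_l)) = (1 - l·M/K) · H₂(M/(K - l·M))`. -/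
theorem condEntropy_disjoint_indicators
    (Ω : Type*) [Fintype Ω] [MeasurableSpace Ω] (P : Measure Ω) [IsProbabilityMeasure P]
    (K M l : ℕ) (hM : 1 ≤ M) (hlM : (l + 1) * M ≤ K)
    (S : Fin (l + 1) → Finset (Fin K))
    (hcard : ∀ j, (S j).card = M)
    (hdisj : ∀ i j, i ≠ j → Disjoint (S i) (S j))
    (Δ : Ω → Fin K)
    (hunif : ∀ x : Fin K, P (Δ ⁻¹' {x}) = (K : ENNReal)⁻¹) :
    condEntropy P (fun ω => if Δ ω ∈ S (Fin.last l) then (1 : Fin 2) else 0)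
        (fun ω => fun j : Fin l => if Δ ω ∈ S j.castSucc then (1 : Fin 2) else 0)
      = (1 - (l : ℝ) * M / K) * Real.binEntropy ((M : ℝ) / ((K : ℝ) - l * M)) :=
  condEntropy_disjoint_indicators_general Ω P K M l S hcard hdisj Δ hunif
end

section
/- Let K, M, l be natural numbers with M ≥ 1 and (l+1)·M ≤ K, let S_1, …, S_{l+1} be pairwise disjoint subsets of Fin K each of cardinality M, let Δ be a uniformly distributed random variable on Fin K, and let W_j = 1 if Δ ∈ S_j and W_j = 0 otherwise, for j = 1, …, l+1. Then the mutual information satisfies I(W_{l+1}; (W_1, …, W_l)) = H2(M/K) − (1 − l·M/K) · H2(M/(K − l·M)). -/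
/-!
Write `η = negMulLog` and `q = M / K`. For pairwise disjoint sets `T j`, the indicator vector of
the uniform point `Δ` is either `0` or the unit vector `Pi.single j 1`, with probabilities
`1 - ∑ |T j| / K` and `|T j| / K`. Hence `H(W_{l+1}) = H₂(q)`,
`H(W_1, …, W_l) = η(1 - l q) + l η(q)`, and, as the pair is a relabelling of the full vector
`(W_1, …, W_{l+1})`, its entropy is `η(1 - (l + 1) q) + (l + 1) η(q)`.
The right-hand side is the same combination by the identity
`a · H₂(b / a) = η(b) + η(a - b) - η(a)` with `a = 1 - l q`, `b = q`.
-/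

open MeasureTheory Real

/-- Mutual information `I(X ; Y) = H(X) + H(Y) - H((X,Y))`. -/
noncomputable def mutualInfo {Ω : Type*} [MeasurableSpace Ω] (P : Measure Ω)
    {α β : Type*} [Fintype α] [Fintype β] (X : Ω → α) (Y : Ω → β) : ℝ :=
  entropy P X + entropy P Y - entropy P (fun ω => (X ω, Y ω))

open Finset Function

theorem MeasureTheory.measure_eq_of_le_of_compl_le {Ω : Type*} [MeasurableSpace Ω]
    {μ : Measure Ω} {s : Set Ω} {a b : ENNReal} (hs : μ s ≤ a) (hsc : μ sᶜ ≤ b)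
    (hab : a + b ≤ μ Set.univ) (hb : b ≠ ⊤) : μ s = a :=
  le_antisymm hs <| (ENNReal.add_le_add_iff_right hb).1 <|
    hab.trans <| (measure_univ_le_add_compl s).trans (add_le_add_right hsc _)

theorem Real.mul_binEntropy_div (a b : ℝ) :
    a * binEntropy (b / a) = negMulLog b + negMulLog (a - b) - negMulLog a := by
  rcases eq_or_ne a 0 with rfl | ha
  · simp [negMulLog, log_neg_eq_log]
  have hdiv : ∀ x, a * negMulLog (x / a) = negMulLog x + x * log a := fun x => by
    rw [div_eq_mul_inv, negMulLog_mul]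
    simp only [negMulLog, log_inv]
    field_simp
  rw [binEntropy_eq_negMulLog_add_negMulLog_one_sub, one_sub_div ha, mul_add, hdiv, hdiv]
  simp only [negMulLog]
  ring

theorem entropy_comp_equiv {Ω : Type*} [MeasurableSpace Ω] (P : Measure Ω)
    {α β : Type*} [Fintype α] [Fintype β] (e : α ≃ β) (X : Ω → α) :
    entropy P (fun ω => e (X ω)) = entropy P X := by
  refine (e.sum_comp _).symm.trans (Finset.sum_congr rfl fun a _ => ?_)
  simp only [Set.preimage, Set.mem_singleton_iff, e.apply_eq_iff_eq]

theorem ne_zero_of_fin_valued {Ω : Type*} [MeasurableSpace Ω] (P : Measure Ω)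
    [IsProbabilityMeasure P] {K : ℕ} (Δ : Ω → Fin K) : K ≠ 0 :=
  have := nonempty_of_isProbabilityMeasure P
  (Δ (Classical.arbitrary Ω)).pos.ne'

def singleOrZero {n : ℕ} : Option (Fin n) → Fin n → Fin 2
  | none => 0
  | some j => Pi.single j 1

theorem singleOrZero_injective {n : ℕ} : Injective (singleOrZero (n := n)) := by
  rintro (_ | i) (_ | j) h
  · rfl
  · simpa [singleOrZero] using congrFun h j
  · simpa [singleOrZero] using congrFun h i
  · by_contra hij
    simpa [singleOrZero, Option.some_inj.not.1 hij] using congrFun h i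

section Indicators

variable {K n : ℕ} {T : Fin n → Finset (Fin K)}

theorem indicators_eq_single (hT : Pairwise (Disjoint on T)) {x : Fin K} {j : Fin n}
    (hx : x ∈ T j) : (fun i => if x ∈ T i then (1 : Fin 2) else 0) = Pi.single j 1 := by
  ext i
  rcases eq_or_ne i j with rfl | hij
  · simp [hx]
  · simp [hij, disjoint_left.1 (hT hij.symm) hx]

theorem indicators_mem_range (hT : Pairwise (Disjoint on T)) (x : Fin K) :
    (fun i => if x ∈ T i then (1 : Fin 2) else 0) ∈ Set.range singleOrZero := by
  rcases em (∃ j, x ∈ T j) with ⟨j, hj⟩ | hx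
  · exact ⟨some j, (indicators_eq_single hT hj).symm⟩
  · exact ⟨none, by ext j; simp [singleOrZero, not_exists.1 hx j]⟩

theorem filter_indicators_eq_singleOrZero_some (hT : Pairwise (Disjoint on T)) (j : Fin n) :
    ({x | (fun i => if x ∈ T i then (1 : Fin 2) else 0) = singleOrZero (some j)} : Finset (Fin K))
      = T j := by
  ext x
  rw [mem_filter_univ]
  exact ⟨fun hx => by simpa [singleOrZero] using congrFun hx j, indicators_eq_single hT⟩

theorem card_filter_indicators_eq_singleOrZero_none (hT : Pairwise (Disjoint on T)) :
    (#{x | (fun i => if x ∈ T i then (1 : Fin 2) else 0) = singleOrZero none} : ℝ)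
      = K - ∑ j, (#(T j) : ℝ) := by
  have hsupport : ({x | ¬(fun i => if x ∈ T i then (1 : Fin 2) else 0) = 0} : Finset (Fin K))
      = univ.biUnion T := by
    ext x
    simp [funext_iff]
  have hcard := card_filter_add_card_filter_not (s := univ)
    fun x => (fun i => if x ∈ T i then (1 : Fin 2) else 0) = 0
  rw [hsupport, card_biUnion (hT.set_pairwise _), card_univ, Fintype.card_fin] at hcard
  rw [eq_sub_iff_add_eq]
  exact_mod_cast hcard

end Indicators

section Uniform

variable {Ω : Type*} [MeasurableSpace Ω] {P : Measure Ω} {K : ℕ} {Δ : Ω → Fin K}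

theorem measure_preimage_le_card_mul_inv (hunif : ∀ x, P (Δ ⁻¹' {x}) = (K : ENNReal)⁻¹)
    (T : Finset (Fin K)) : P (Δ ⁻¹' T) ≤ #T * (K : ENNReal)⁻¹ := by
  rw [← Set.biUnion_preimage_singleton]
  calc _ ≤ ∑ x ∈ T, P (Δ ⁻¹' {x}) := measure_biUnion_finset_le T _
    _ = _ := by simp [hunif]

variable [IsProbabilityMeasure P]

/-- The fibres of `Δ` need not be measurable, so additivity is replaced by subadditivity on `T`
and on `Tᶜ`, whose bounds already add up to `P univ = 1`. -/
theorem measure_preimage_toReal_eq_card_div (hunif : ∀ x, P (Δ ⁻¹' {x}) = (K : ENNReal)⁻¹)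
    (T : Finset (Fin K)) : (P (Δ ⁻¹' T)).toReal = #T / K := by
  have hK : (K : ENNReal) ≠ 0 := Nat.cast_ne_zero.2 (ne_zero_of_fin_valued P Δ)
  have hsum : #T * (K : ENNReal)⁻¹ + #Tᶜ * (K : ENNReal)⁻¹ = P Set.univ := by
    rw [← add_mul, ← Nat.cast_add, card_add_card_compl, Fintype.card_fin,
      ENNReal.mul_inv_cancel hK (ENNReal.natCast_ne_top K), measure_univ]
  rw [measure_eq_of_le_of_compl_le (measure_preimage_le_card_mul_inv hunif T)
    (by simpa using measure_preimage_le_card_mul_inv hunif Tᶜ) hsum.le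
    (ENNReal.mul_ne_top (ENNReal.natCast_ne_top _) (ENNReal.inv_ne_top.2 hK))]
  simp [div_eq_mul_inv]

theorem entropy_comp_eq_sum_negMulLog_card (hunif : ∀ x, P (Δ ⁻¹' {x}) = (K : ENNReal)⁻¹)
    {β : Type*} [Fintype β] [DecidableEq β] (f : Fin K → β) :
    entropy P (fun ω => f (Δ ω)) = ∑ b, negMulLog (#{x | f x = b} / K) := by
  refine Finset.sum_congr rfl fun b _ => ?_
  rw [← measure_preimage_toReal_eq_card_div hunif, coe_filter_univ]
  rfl

theorem entropy_indicator (hunif : ∀ x, P (Δ ⁻¹' {x}) = (K : ENNReal)⁻¹)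
    (T : Finset (Fin K)) :
    entropy P (fun ω => if Δ ω ∈ T then (1 : Fin 2) else 0) = binEntropy (#T / K) := by
  rw [entropy_comp_eq_sum_negMulLog_card hunif (fun x => if x ∈ T then (1 : Fin 2) else 0),
    Fin.sum_univ_two, binEntropy_eq_negMulLog_add_negMulLog_one_sub, add_comm]
  have hK : (K : ℝ) ≠ 0 := Nat.cast_ne_zero.2 (ne_zero_of_fin_valued P Δ)
  have h0 : ({x | (if x ∈ T then (1 : Fin 2) else 0) = 0} : Finset (Fin K)) = Tᶜ := by
    ext x; by_cases hx : x ∈ T <;> simp [hx]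
  have h1 : ({x | (if x ∈ T then (1 : Fin 2) else 0) = 1} : Finset (Fin K)) = T := by
    ext x; by_cases hx : x ∈ T <;> simp [hx]
  have hcompl : (#Tᶜ : ℝ) = K - #T := by
    rw [eq_sub_iff_add_eq, ← Nat.cast_add, card_compl_add_card, Fintype.card_fin]
  rw [h0, h1, hcompl, one_sub_div hK]

theorem entropy_indicators (hunif : ∀ x, P (Δ ⁻¹' {x}) = (K : ENNReal)⁻¹)
    {n : ℕ} (T : Fin n → Finset (Fin K)) (hT : Pairwise (Disjoint on T)) :
    entropy P (fun ω j => if Δ ω ∈ T j then (1 : Fin 2) else 0)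
      = negMulLog (1 - ∑ j, (#(T j) : ℝ) / K) + ∑ j, negMulLog (#(T j) / K) := by
  have hK : (K : ℝ) ≠ 0 := Nat.cast_ne_zero.2 (ne_zero_of_fin_valued P Δ)
  rw [entropy_comp_eq_sum_negMulLog_card hunif fun x j => if x ∈ T j then (1 : Fin 2) else 0,
    ← Fintype.sum_of_injective _ singleOrZero_injective _ _ ?_ fun _ => rfl, Fintype.sum_option]
  · simp only [filter_indicators_eq_singleOrZero_some hT,
      card_filter_indicators_eq_singleOrZero_none hT, sub_div, div_self hK, sum_div]
  · intro v hv
    rw [filter_eq_empty_iff.2 fun x _ (hx : _ = v) => hv (hx ▸ indicators_mem_range hT x)]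
    simp

end Uniform

theorem mutualInfo_disjoint_indicators_general
    (Ω : Type*) [MeasurableSpace Ω] (P : Measure Ω) [IsProbabilityMeasure P]
    (K M l : ℕ)
    (S : Fin (l + 1) → Finset (Fin K))
    (hcard : ∀ j, (S j).card = M)
    (hdisj : ∀ i j, i ≠ j → Disjoint (S i) (S j))
    (Δ : Ω → Fin K)
    (hunif : ∀ x : Fin K, P (Δ ⁻¹' {x}) = (K : ENNReal)⁻¹) :
    mutualInfo P (fun ω => if Δ ω ∈ S (Fin.last l) then (1 : Fin 2) else 0)
        (fun ω => fun j : Fin l => if Δ ω ∈ S j.castSucc then (1 : Fin 2) else 0)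
      = Real.binEntropy ((M : ℝ) / K)
        - (1 - (l : ℝ) * M / K) * Real.binEntropy ((M : ℝ) / ((K : ℝ) - l * M)) := by
  have hK : (K : ℝ) ≠ 0 := Nat.cast_ne_zero.2 (ne_zero_of_fin_valued P Δ)
  have hS : Pairwise (Disjoint on S) := hdisj
  have hpair := entropy_comp_equiv P (Fin.snocEquiv fun _ => Fin 2).symm
    fun ω j => if Δ ω ∈ S j then (1 : Fin 2) else 0
  simp only [Fin.snocEquiv_symm_apply, Fin.init_def] at hpair
  rw [mutualInfo, hpair, entropy_indicator hunif, entropy_indicators hunif S hS,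
    entropy_indicators hunif _ (hS.comp_of_injective (Fin.castSucc_injective l)),
    show (M : ℝ) / (K - l * M) = M / K / (1 - l * M / K) by field_simp, mul_binEntropy_div]
  simp only [hcard, sum_const, card_univ, Fintype.card_fin, nsmul_eq_mul, mul_div_assoc]
  rw [show 1 - ((l + 1 : ℕ) : ℝ) * (M / K) = 1 - l * (M / K) - M / K by push_cast; ring]
  push_cast
  ring

/-- **Mutual information of one more disjoint search indicator.** Let `Δ` be uniform on
`Fin K`, and let `S 1, …, S (l+1)` be pairwise disjoint subsets of `Fin K`, each of
cardinality `M ≥ 1`, with `(l+1)·M ≤ K`. With `W j = 1` iff `Δ ∈ S j`,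
`I(W_{l+1} ; (W_1, …, W_l)) = H₂(M/K) - (1 - l·M/K) · H₂(M/(K - l·M))`. -/
theorem mutualInfo_disjoint_indicators
    (Ω : Type*) [Fintype Ω] [MeasurableSpace Ω] (P : Measure Ω) [IsProbabilityMeasure P]
    (K M l : ℕ) (hM : 1 ≤ M) (hlM : (l + 1) * M ≤ K)
    (S : Fin (l + 1) → Finset (Fin K))
    (hcard : ∀ j, (S j).card = M)
    (hdisj : ∀ i j, i ≠ j → Disjoint (S i) (S j))
    (Δ : Ω → Fin K)
    (hunif : ∀ x : Fin K, P (Δ ⁻¹' {x}) = (K : ENNReal)⁻¹) :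
    mutualInfo P (fun ω => if Δ ω ∈ S (Fin.last l) then (1 : Fin 2) else 0)
        (fun ω => fun j : Fin l => if Δ ω ∈ S j.castSucc then (1 : Fin 2) else 0)
      = Real.binEntropy ((M : ℝ) / K)
        - (1 - (l : ℝ) * M / K) * Real.binEntropy ((M : ℝ) / ((K : ℝ) - l * M)) :=
  mutualInfo_disjoint_indicators_general Ω P K M l S hcard hdisj Δ hunif
end

section
/- For every fixed l ∈ ℕ with l ≥ 1 and every sequence of natural numbers M : ℕ → ℕ with 1 ≤ M(K) for all K and M(K)/K → 0 as K → ∞, one has lim_{K→∞} [(1 − l·M(K)/K) · H2(M(K)/(K − l·M(K)))] / H2(M(K)/K) = 1 (the expressions being defined for all sufficiently large K since M(K)/K → 0). -/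
/-!
As `x → 0⁺`, `H₂(x) ~ -x log x`: the second term `-(1 - x) log (1 - x)` of `H₂` is `O(x)`,
hence negligible against `x log x`. With `q = x / (1 - c x)` this gives
`(1 - c x) H₂(q) ~ -(1 - c x) q log q = -x log x + x log (1 - c x) ~ -x log x ~ H₂(x)`
because `log (1 - c x) → 0`. The theorem is the case `c = l`, `x = M(K)/K`.
-/

open Filter Real Asymptotics Topology

namespace Real

lemma negMulLog_one_sub_isBigO : (fun x : ℝ => negMulLog (1 - x)) =O[𝓝 0] fun x => x := by
  have h : HasDerivAt (fun x : ℝ => negMulLog (1 - x)) (-(-log 1 - 1)) 0 :=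
    HasDerivAt.comp_const_sub 1 0 (by rw [sub_zero]; exact hasDerivAt_negMulLog one_ne_zero)
  simpa using h.isBigO_sub

lemma isLittleO_negMulLog : (fun x : ℝ => x) =o[𝓝[>] 0] negMulLog := by
  have hlog : (fun _ : ℝ => (1 : ℝ)) =o[𝓝[>] 0] fun x => -log x :=
    (isLittleO_one_left_iff ℝ).mpr <| by
      simpa only [norm_neg, norm_eq_abs, Function.comp_def] using
        tendsto_abs_atBot_atTop.comp tendsto_log_nhdsGT_zero
  have h := (isBigO_refl (fun x : ℝ => x) (𝓝[>] 0)).mul_isLittleO hlog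
  simp only [mul_one] at h
  exact h.congr_right fun x => by simp [negMulLog]

lemma binEntropy_isEquivalent_negMulLog : binEntropy ~[𝓝[>] 0] negMulLog := by
  rw [binEntropy_eq_negMulLog_add_negMulLog_one_sub']
  exact IsEquivalent.refl.add_isLittleO <|
    (negMulLog_one_sub_isBigO.mono nhdsWithin_le_nhds).trans_isLittleO isLittleO_negMulLog

lemma mul_binEntropy_div_one_sub_mul_isEquivalent (c : ℝ) :
    (fun x => (1 - c * x) * binEntropy (x / (1 - c * x))) ~[𝓝[>] 0] binEntropy := by
  have hlin : Tendsto (fun x : ℝ => 1 - c * x) (𝓝[>] 0) (𝓝 1) := by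
    have hcont : Continuous fun x : ℝ => 1 - c * x := by fun_prop
    simpa using (hcont.tendsto 0).mono_left nhdsWithin_le_nhds
  have hpos : ∀ᶠ x in 𝓝[>] 0, 0 < x ∧ 0 < 1 - c * x :=
    eventually_mem_nhdsWithin.and (hlin.eventually_const_lt one_pos)
  have hq : Tendsto (fun x => x / (1 - c * x)) (𝓝[>] 0) (𝓝[>] 0) := by
    refine tendsto_nhdsWithin_iff.mpr ⟨?_, hpos.mono fun x hx => div_pos hx.1 hx.2⟩
    have h := (tendsto_nhdsWithin_of_tendsto_nhds tendsto_id).div hlin one_ne_zero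
    rwa [zero_div] at h
  have hsmall : (fun x => x * log (1 - c * x)) =o[𝓝[>] 0] fun x => x := by
    have hlog : Tendsto (fun x => log (1 - c * x)) (𝓝[>] 0) (𝓝 0) := by
      simpa using hlin.log one_ne_zero
    simpa using (isBigO_refl (fun x : ℝ => x) _).mul_isLittleO (isLittleO_one_iff ℝ |>.mpr hlog)
  have hexpand : (fun x => (1 - c * x) * binEntropy (x / (1 - c * x))) ~[𝓝[>] 0]
      fun x => negMulLog x + x * log (1 - c * x) := by
    refine (IsEquivalent.refl.mul
      (binEntropy_isEquivalent_negMulLog.comp_tendsto hq)).congr_right ?_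
    filter_upwards [hpos] with x ⟨hx, hcx⟩
    simp only [Pi.mul_apply, Function.comp_apply, negMulLog, log_div hx.ne' hcx.ne']
    field_simp
    ring
  exact hexpand.trans <|
    (IsEquivalent.refl.add_isLittleO (hsmall.trans isLittleO_negMulLog)).trans
      binEntropy_isEquivalent_negMulLog.symm

lemma tendsto_mul_binEntropy_div_one_sub_mul_div_binEntropy (c : ℝ) :
    Tendsto (fun x => (1 - c * x) * binEntropy (x / (1 - c * x)) / binEntropy x)
      (𝓝[>] 0) (𝓝 1) := by
  refine (isEquivalent_iff_tendsto_one ?_).mp (mul_binEntropy_div_one_sub_mul_isEquivalent c)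
  filter_upwards [Ioo_mem_nhdsGT one_pos] with x hx
  exact (binEntropy_pos hx.1 hx.2).ne'

end Real

theorem approx_search_entropy_ratio_general (l : ℕ) (M : ℕ → ℕ)
    (hM : ∀ K, 1 ≤ M K)
    (hMo : Tendsto (fun K : ℕ => (M K : ℝ) / K) atTop (nhds 0)) :
    Tendsto
      (fun K : ℕ =>
        (1 - (l : ℝ) * M K / K) *
            Real.binEntropy ((M K : ℝ) / ((K : ℝ) - l * M K)) / Real.binEntropy ((M K : ℝ) / K))
      atTop (nhds 1) := by
  have hpos : ∀ᶠ K : ℕ in atTop, (0 : ℝ) < K :=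
    (eventually_gt_atTop 0).mono fun K hK => by exact_mod_cast hK
  have hfrac : Tendsto (fun K : ℕ => (M K : ℝ) / K) atTop (𝓝[>] 0) :=
    tendsto_nhdsWithin_iff.mpr ⟨hMo, hpos.mono fun K hK => div_pos (by exact_mod_cast hM K) hK⟩
  refine ((tendsto_mul_binEntropy_div_one_sub_mul_div_binEntropy l).comp hfrac).congr' ?_
  filter_upwards [hpos] with K hK
  simp only [Function.comp_apply]
  rw [mul_div_assoc', one_sub_div hK.ne', div_div_div_cancel_right₀ hK.ne']

/-- **Sufficient condition for `M`-approximate private search with `M = o(K)`.** For every fixed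
`l ≥ 1` and every sequence `M : ℕ → ℕ` with `1 ≤ M K` for all `K` and `M K / K → 0`, the ratio
`(1 - l·M(K)/K) · H₂(M(K)/(K - l·M(K))) / H₂(M(K)/K)` tends to `1` as `K → ∞`. -/
theorem approx_search_entropy_ratio (l : ℕ) (hl : 1 ≤ l) (M : ℕ → ℕ)
    (hM : ∀ K, 1 ≤ M K)
    (hMo : Tendsto (fun K : ℕ => (M K : ℝ) / K) atTop (nhds 0)) :
    Tendsto
      (fun K : ℕ =>
        (1 - (l : ℝ) * M K / K) *
            Real.binEntropy ((M K : ℝ) / ((K : ℝ) - l * M K)) / Real.binEntropy ((M K : ℝ) / K))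
      atTop (nhds 1) :=
  approx_search_entropy_ratio_general l M hM hMo
end

section
/- Let K, M be natural numbers with M ≥ 2, 2M ≤ K, and M² ≥ K, and set γ = M/K (a real number in (0, 1/2]). Then H2(⌊γM⌋/M)·(M/K) + H2((M − ⌊γM⌋)/(K − M))·((K − M)/K) ≥ H2((γM − 1)/M)·(M/K) + H2((γ(K − M) − 1)/(K − M))·((K − M)/K), where ⌊γM⌋ = ⌊M²/K⌋. -/
open Real

lemma binEntropy_aux {x y : ℝ} (hx0 : 0 ≤ x) (hx : x ≤ 2⁻¹) (hxy : x ≤ y)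
    (hxy' : x ≤ 1 - y) : Real.binEntropy x ≤ Real.binEntropy y := by
  rcases le_or_gt y 2⁻¹ with hy | hy
  · exact Real.binEntropy_strictMonoOn.monotoneOn ⟨hx0, hx⟩ ⟨hx0.trans hxy, hy⟩ hxy
  · rw [← Real.binEntropy_one_sub y]
    exact Real.binEntropy_strictMonoOn.monotoneOn ⟨hx0, hx⟩
      ⟨hx0.trans hxy', by linarith⟩ hxy'

/-- **Inequality (24) in the proof for `M = Ω(K)`.** For natural numbers `K, M` with `M ≥ 2`,
`2M ≤ K` and `M² ≥ K`, and `γ = M/K`, the per-record conditional entropy expression with the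
floors satisfies
`H₂(⌊γM⌋/M)·(M/K) + H₂((M - ⌊γM⌋)/(K - M))·((K - M)/K)
  ≥ H₂((γM - 1)/M)·(M/K) + H₂((γ(K - M) - 1)/(K - M))·((K - M)/K)`. -/
theorem approx_search_floor_entropy_ineq (K M : ℕ) (hM : 2 ≤ M) (h2M : 2 * M ≤ K)
    (hM2 : K ≤ M ^ 2) (γ : ℝ) (hγ : γ = (M : ℝ) / K) :
    Real.binEntropy ((γ * M - 1) / M) * ((M : ℝ) / K)
        + Real.binEntropy ((γ * ((K : ℝ) - M) - 1) / ((K : ℝ) - M)) * (((K : ℝ) - M) / K)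
      ≤ Real.binEntropy ((⌊γ * M⌋₊ : ℝ) / M) * ((M : ℝ) / K)
        + Real.binEntropy (((M : ℝ) - ⌊γ * M⌋₊) / ((K : ℝ) - M)) * (((K : ℝ) - M) / K) := by
  have hm : (2 : ℝ) ≤ M := by exact_mod_cast hM
  have hk : 2 * (M : ℝ) ≤ K := by exact_mod_cast h2M
  have hk2 : (K : ℝ) ≤ (M : ℝ) ^ 2 := by exact_mod_cast hM2
  have hm0 : (0 : ℝ) < M := by linarith
  have hk0 : (0 : ℝ) < K := by linarith
  have hkm0 : (0 : ℝ) < (K : ℝ) - M := by linarith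
  set f : ℝ := (⌊γ * M⌋₊ : ℝ) with hf
  have hγ0 : 0 ≤ γ * M := by rw [hγ]; positivity
  have hfle : f ≤ γ * M := Nat.floor_le hγ0
  have hflt : γ * M < f + 1 := Nat.lt_floor_add_one _
  have hgm : γ * M = (M : ℝ) ^ 2 / K := by rw [hγ]; field_simp
  have hgm1 : 1 ≤ γ * M := by rw [hgm, le_div_iff₀ hk0]; linarith
  have hghalf : γ * M ≤ M / 2 := by
    rw [hgm, div_le_div_iff₀ hk0 two_pos]; nlinarith
  have hgkm : γ * ((K : ℝ) - M) = M - γ * M := by rw [hγ]; field_simp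
  have hgkm1 : 1 ≤ γ * ((K : ℝ) - M) := by
    have h : (M : ℝ) ^ 2 / K ≤ M - 1 := by rw [div_le_iff₀ hk0]; nlinarith
    rw [hgkm, hgm]; linarith
  have hkey : 3 * (M : ℝ) - K ≤ 2 * (γ * M) := by
    rw [hgm, show (2:ℝ) * ((M : ℝ) ^ 2 / K) = 2 * (M : ℝ) ^ 2 / K by ring, le_div_iff₀ hk0]
    nlinarith
  have h1 : Real.binEntropy ((γ * M - 1) / M) ≤ Real.binEntropy (f / M) := by
    apply binEntropy_aux
    · apply div_nonneg (by linarith) hm0.le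
    · rw [div_le_iff₀ hm0]; linarith
    · exact div_le_div_of_nonneg_right (by linarith) hm0.le
    · have h : (1 : ℝ) - f / M = (M - f) / M := by field_simp
      rw [h]; exact div_le_div_of_nonneg_right (by linarith) hm0.le
  have h2 : Real.binEntropy ((γ * ((K : ℝ) - M) - 1) / ((K : ℝ) - M))
      ≤ Real.binEntropy (((M : ℝ) - f) / ((K : ℝ) - M)) := by
    apply binEntropy_aux
    · apply div_nonneg (by linarith) hkm0.le
    · rw [div_le_iff₀ hkm0]; rw [hgkm]; linarith
    · rw [hgkm]; exact div_le_div_of_nonneg_right (by linarith) hkm0.le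
    · have h : (1 : ℝ) - ((M : ℝ) - f) / ((K : ℝ) - M)
          = ((K : ℝ) - M - (M - f)) / ((K : ℝ) - M) := by field_simp
      rw [h, hgkm]; exact div_le_div_of_nonneg_right (by linarith) hkm0.le
  have hc1 : (0 : ℝ) ≤ (M : ℝ) / K := by positivity
  have hc2 : (0 : ℝ) ≤ ((K : ℝ) - M) / K := by positivity
  exact add_le_add (mul_le_mul_of_nonneg_right h1 hc1)
    (mul_le_mul_of_nonneg_right h2 hc2)
end

section
/- Let K be a natural number divisible by 8. For s ∈ ZMod K and t ∈ ℕ, let Arc(s, t) denote the cyclic interval {s, s+1, …, s+t−1} ⊆ ZMod K (the image of {0,…,t−1} under addition of s). Let S₁ = Arc(a, K/2) and S₂ = Arc(b, K/2) be two cyclic intervals of length K/2 with |S₁ ∩ S₂| = K/4, and let the four regions be R₁ = S₁ ∩ S₂, R₂ = S₁ \ S₂, R₃ = S₂ \ S₁, R₄ = (S₁ ∪ S₂)ᶜ. Then there is no c ∈ ZMod K such that the cyclic interval S₃ = Arc(c, K/2) satisfies |S₃ ∩ R_i| = K/8 for all i ∈ {1, 2, 3, 4}. -/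
/-- The cyclic interval `{s, s+1, …, s+t-1}` in `ZMod K`. -/
def arc (K : ℕ) (s : ZMod K) (t : ℕ) : Finset (ZMod K) :=
  (Finset.range t).image (fun i : ℕ => (s + (i : ZMod K)))

lemma mem_arc {K t : ℕ} [NeZero K] (_ht : t ≤ K) {s x : ZMod K} :
    x ∈ arc K s t ↔ (x - s).val < t := by
  simp only [arc, Finset.mem_image, Finset.mem_range]
  constructor
  · rintro ⟨i, hi, rfl⟩
    rw [add_sub_cancel_left, ZMod.val_natCast]
    exact lt_of_le_of_lt (Nat.mod_le i K) hi
  · intro h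
    exact ⟨(x - s).val, h, by rw [ZMod.natCast_rightInverse (x - s), add_sub_cancel]⟩

lemma val_sub' {K : ℕ} [NeZero K] (w d : ZMod K) :
    (w - d).val = (w.val + (K - d.val)) % K := by
  rw [sub_eq_add_neg, ZMod.val_add, ZMod.neg_val]
  split_ifs with h
  · subst h
    simp [ZMod.val_zero, Nat.add_mod_right, Nat.mod_eq_of_lt (ZMod.val_lt w)]
  · rfl

lemma nat_count (m e : ℕ) (_hm0 : 0 < m) (he : e < m + m) :
    ((Finset.range m).filter (fun n => (n + (m + m - e)) % (m + m) < m)).card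
      = (m - e) + (e - m) := by
  rcases le_or_gt e m with h | h
  · have : (Finset.range m).filter (fun n => (n + (m + m - e)) % (m + m) < m)
        = Finset.Ico e m := by
      ext n
      simp only [Finset.mem_filter, Finset.mem_range, Finset.mem_Ico]
      constructor
      · rintro ⟨hn, hmod⟩
        refine ⟨?_, hn⟩
        by_contra hne
        push_neg at hne
        have h1 : n + (m + m - e) < m + m := by omega
        rw [Nat.mod_eq_of_lt h1] at hmod
        omega
      · rintro ⟨hen, hn⟩
        have h1 : n + (m + m - e) = (n - e) + (m + m) := by omega
        rw [h1, Nat.add_mod_right, Nat.mod_eq_of_lt (by omega)]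
        exact ⟨hn, by omega⟩
    rw [this, Nat.card_Ico]
    omega
  · have : (Finset.range m).filter (fun n => (n + (m + m - e)) % (m + m) < m)
        = Finset.range (e - m) := by
      ext n
      simp only [Finset.mem_filter, Finset.mem_range]
      constructor
      · rintro ⟨hn, hmod⟩
        rw [Nat.mod_eq_of_lt (by omega)] at hmod
        omega
      · intro hn
        have hn' : n < m := by omega
        rw [Nat.mod_eq_of_lt (by omega)]
        exact ⟨hn', by omega⟩
    rw [this, Finset.card_range]
    omega

lemma arc_inter_card {K m : ℕ} [NeZero K] (hm : m + m = K) (hm0 : 0 < m) (x y : ZMod K) :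
    ((arc K x m) ∩ (arc K y m)).card = (m - (y - x).val) + ((y - x).val - m) := by
  set e := (y - x).val with he
  have hek : e < K := ZMod.val_lt _
  have hmK : m ≤ K := by omega
  rw [← nat_count m e hm0 (by omega)]
  apply Finset.card_bij (fun z _ => (z - x).val)
  · intro z hz
    rw [Finset.mem_inter, mem_arc hmK, mem_arc hmK] at hz
    simp only [Finset.mem_filter, Finset.mem_range]
    obtain ⟨hz1, hz2⟩ := hz
    refine ⟨hz1, ?_⟩
    have h' : z - y = (z - x) - (y - x) := by ring
    rw [h', val_sub'] at hz2
    rw [hm]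
    exact hz2
  · intro z1 h1 z2 h2 hv
    have h' : z1 - x = z2 - x := ZMod.val_injective _ hv
    exact sub_left_inj.mp h'
  · intro n hn
    simp only [Finset.mem_filter, Finset.mem_range] at hn
    rw [hm] at hn
    refine ⟨x + (n : ZMod K), ?_, ?_⟩
    · rw [Finset.mem_inter, mem_arc hmK, mem_arc hmK]
      have hv : (x + (n : ZMod K) - x).val = n := by
        rw [add_sub_cancel_left, ZMod.val_natCast, Nat.mod_eq_of_lt (by omega)]
      constructor
      · rw [hv]; exact hn.1
      · have : x + (n : ZMod K) - y = (x + (n : ZMod K) - x) - (y - x) := by ring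
        rw [this, val_sub', hv]
        exact hn.2
    · rw [add_sub_cancel_left, ZMod.val_natCast, Nat.mod_eq_of_lt (by omega)]

lemma key_split {K : ℕ} (S X Y : Finset (ZMod K)) :
    (S ∩ (X ∩ Y)).card + (S ∩ (X \ Y)).card = (S ∩ X).card := by
  rw [← Finset.card_union_of_disjoint
      (((Finset.disjoint_sdiff_inter X Y).symm).mono
        Finset.inter_subset_right Finset.inter_subset_right),
    ← Finset.inter_union_distrib_left, Finset.union_comm, Finset.sdiff_union_inter]


/-- **Combinatorial core of Proposition 4.** Let `8 ∣ K`, `K > 0`, and let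
`S₁ = Arc(a, K/2)`, `S₂ = Arc(b, K/2)` be semicircles with `|S₁ ∩ S₂| = K/4`. Then no
semicircle `S₃ = Arc(c, K/2)` meets each of the four regions `S₁ ∩ S₂`, `S₁ \ S₂`,
`S₂ \ S₁`, `(S₁ ∪ S₂)ᶜ` in exactly `K/8` elements. -/
theorem no_third_semicircle (K : ℕ) [NeZero K] (hK : 8 ∣ K) (a b : ZMod K)
    (hab : ((arc K a (K / 2)) ∩ (arc K b (K / 2))).card = K / 4) :
    ¬ ∃ c : ZMod K,
      ((arc K c (K / 2)) ∩ (arc K a (K / 2) ∩ arc K b (K / 2))).card = K / 8 ∧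
      ((arc K c (K / 2)) ∩ (arc K a (K / 2) \ arc K b (K / 2))).card = K / 8 ∧
      ((arc K c (K / 2)) ∩ (arc K b (K / 2) \ arc K a (K / 2))).card = K / 8 ∧
      ((arc K c (K / 2)) ∩ (arc K a (K / 2) ∪ arc K b (K / 2))ᶜ).card = K / 8 := by
  rintro ⟨c, h1, h2, h3, h4⟩
  obtain ⟨j, rfl⟩ := hK
  have hj : 0 < j := by
    rcases Nat.eq_zero_or_pos j with h | h
    · exact absurd (by omega) (NeZero.ne (8 * j))
    · exact h
  have h2m : (8 * j) / 2 = 4 * j := by omega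
  have h4m : (8 * j) / 4 = 2 * j := by omega
  have h8m : (8 * j) / 8 = j := by omega
  rw [h2m, h4m] at hab
  rw [h2m, h8m] at h1 h2 h3
  have hmm : 4 * j + 4 * j = 8 * j := by ring
  have hm0 : 0 < 4 * j := by omega
  -- offset between a and b
  have eab := arc_inter_card hmm hm0 a b
  rw [hab] at eab
  -- |S₃ ∩ S₁| = 2j
  have k1 : ((arc (8 * j) c (4 * j)) ∩ (arc (8 * j) a (4 * j))).card = 2 * j := by
    rw [← key_split (arc (8 * j) c (4 * j)) (arc (8 * j) a (4 * j)) (arc (8 * j) b (4 * j)),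
      h1, h2]
    ring
  -- |S₃ ∩ S₂| = 2j
  have k2 : ((arc (8 * j) c (4 * j)) ∩ (arc (8 * j) b (4 * j))).card = 2 * j := by
    rw [← key_split (arc (8 * j) c (4 * j)) (arc (8 * j) b (4 * j)) (arc (8 * j) a (4 * j)),
      Finset.inter_comm (arc (8 * j) b (4 * j)) (arc (8 * j) a (4 * j)), h1, h3]
    ring
  have eca := arc_inter_card hmm hm0 c a
  rw [k1] at eca
  have ecb := arc_inter_card hmm hm0 c b
  rw [k2] at ecb
  set e := (b - a).val with he
  set u := (a - c).val with hu
  set v := (b - c).val with hv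
  have heK : e < 8 * j := ZMod.val_lt _
  have huK : u < 8 * j := ZMod.val_lt _
  have hvK : v < 8 * j := ZMod.val_lt _
  have he' : e = 2 * j ∨ e = 6 * j := by omega
  have hu' : u = 2 * j ∨ u = 6 * j := by omega
  have hv' : v = 2 * j ∨ v = 6 * j := by omega
  have hval : e = (v + (8 * j - u)) % (8 * j) := by
    have hba : b - a = (b - c) - (a - c) := by ring
    rw [he, hba, val_sub']
  rcases hu' with hu2 | hu2 <;> rcases hv' with hv2 | hv2
  · have h5 : v + (8 * j - u) = 8 * j := by omega
    rw [h5, Nat.mod_self] at hval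
    omega
  · have h5 : v + (8 * j - u) = 4 * j + 8 * j := by omega
    rw [h5, Nat.add_mod_right, Nat.mod_eq_of_lt (by omega)] at hval
    omega
  · have h5 : v + (8 * j - u) = 4 * j := by omega
    rw [h5, Nat.mod_eq_of_lt (by omega)] at hval
    omega
  · have h5 : v + (8 * j - u) = 8 * j := by omega
    rw [h5, Nat.mod_self] at hval
    omega
end
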